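/- arXiv:0802.3433 — 4 statements merged into one kernel-verified Lean document; each statement's English description precedes it below -/
import Mathlib

section
/- Inserting an extra partial quotient b between positions j and j+1 multiplies the continuant denominator by a factor between (b+1)/2 and b+1: for any positive integers a₁,...,aₙ and b, and any 1 ≤ j < n, (b+1)/2 ≤ q_{n+1}(a₁,...,aⱼ,b,a_{j+1},...,aₙ)/qₙ(a₁,...,aₙ) ≤ b+1. -/
/-!
For a nonempty prefix `l₁`, both `s ↦ Q (l₁ ++ b :: s)` and `s ↦ Q (l₁ ++ s)` satisfy the
three-term recurrence `F (s ++ [a, c]) = c * F (s ++ [a]) + F s`, whose coefficients are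
nonnegative. Hence the two homogeneous linear inequalities `X ≤ (b + 1) Y` and
`(b + 1) Y ≤ 2 X` between them propagate from two consecutive lengths of `s` to all lengths.
At `s = []` and `s = [c]` they reduce, writing `l₁ = p ++ [a]`, to `Q p ≤ Q (p ++ [a])`.
-/

theorem List.induction_two_step_right {α : Type*} {P : List α → Prop} (nil : P [])
    (singleton : ∀ a, P [a]) (step : ∀ s a c, P s → P (s ++ [a]) → P (s ++ [a, c])) :
    ∀ s, P s := by
  suffices h : ∀ s, P s ∧ ∀ a, P (s ++ [a]) from fun s ↦ (h s).1
  intro s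
  induction s using List.reverseRecOn with
  | nil => exact ⟨nil, singleton⟩
  | append_singleton s a ih =>
    exact ⟨ih.2 a, fun c ↦ by simpa using step s a c ih.1 (ih.2 a)⟩

structure IsContinuant (Q : List ℕ → ℕ) : Prop where
  nil : Q [] = 1
  singleton : ∀ a, Q [a] = a
  append_pair : ∀ l a b, Q (l ++ [a, b]) = b * Q (l ++ [a]) + Q l

namespace IsContinuant

variable {Q : List ℕ → ℕ}

theorem append_append_pair (hQ : IsContinuant Q) (u s : List ℕ) (a c : ℕ) :
    Q (u ++ (s ++ [a, c])) = c * Q (u ++ (s ++ [a])) + Q (u ++ s) := by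
  simpa using hQ.append_pair (u ++ s) a c

theorem le_append_singleton (hQ : IsContinuant Q) (l : List ℕ) {a : ℕ} (ha : 0 < a) :
    Q l ≤ Q (l ++ [a]) := by
  rcases l.eq_nil_or_concat with rfl | ⟨m, a', rfl⟩
  · rw [List.nil_append, hQ.nil, hQ.singleton]
    exact ha
  · rw [List.concat_eq_append, List.append_assoc, List.singleton_append, hQ.append_pair]
    nlinarith

theorem pos (hQ : IsContinuant Q) {l : List ℕ} (hl : ∀ x ∈ l, 0 < x) : 0 < Q l := by
  induction l using List.reverseRecOn with
  | nil => simp [hQ.nil]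
  | append_singleton l a ih =>
    have hl' : ∀ x ∈ l, 0 < x := fun x hx ↦ hl x (by simp [hx])
    exact (ih hl').trans_le (hQ.le_append_singleton l (hl a (by simp)))

theorem insert_bounds (hQ : IsContinuant Q) {l₁ : List ℕ} (h₁ : l₁ ≠ [])
    (hl₁ : ∀ x ∈ l₁, 0 < x) {b : ℕ} (hb : 0 < b) (l₂ : List ℕ) (hl₂ : ∀ x ∈ l₂, 0 < x) :
    Q (l₁ ++ b :: l₂) ≤ (b + 1) * Q (l₁ ++ l₂) ∧
      (b + 1) * Q (l₁ ++ l₂) ≤ 2 * Q (l₁ ++ b :: l₂) := by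
  obtain ⟨p, a, rfl⟩ := (List.eq_nil_or_concat l₁).resolve_left h₁
  rw [List.concat_eq_append] at hl₁ ⊢
  have hmono : Q p ≤ Q (p ++ [a]) := hQ.le_append_singleton p (hl₁ a (by simp))
  have hX : ∀ s, Q (p ++ [a] ++ b :: s) = Q ((p ++ [a, b]) ++ s) := by simp
  revert l₂
  refine List.induction_two_step_right ?_ ?_ ?_
  · intro _
    rw [hX, List.append_nil, List.append_nil, hQ.append_pair]
    constructor <;> nlinarith
  · intro c hpos
    have hc : 0 < c := hpos c (by simp)
    have hXc : Q (p ++ [a, b] ++ [c]) = c * Q (p ++ [a, b]) + Q (p ++ [a]) := by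
      simpa using hQ.append_pair (p ++ [a]) b c
    have hYc : Q (p ++ [a] ++ [c]) = c * Q (p ++ [a]) + Q p := by
      simpa using hQ.append_pair p a c
    have hp : Q p ≤ c * Q (p ++ [a]) := hmono.trans (Nat.le_mul_of_pos_left _ hc)
    rw [hX, hXc, hYc, hQ.append_pair]
    constructor <;> nlinarith [Nat.mul_le_mul_left b hp]
  · intro s a' c ih ih' hs
    have hs' : ∀ x ∈ s, 0 < x := fun x hx ↦ hs x (by simp [hx])
    have hsa : ∀ x ∈ s ++ [a'], 0 < x := fun x hx ↦ hs x (by simp at hx ⊢; tauto)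
    obtain ⟨upper, lower⟩ := ih hs'
    obtain ⟨upper', lower'⟩ := ih' hsa
    rw [hX] at upper lower upper' lower' ⊢
    rw [hQ.append_append_pair, hQ.append_append_pair]
    constructor <;> nlinarith

end IsContinuant

theorem contfrac_denom_insert_general
    (Q : List ℕ → ℕ)
    (hQ0 : Q [] = 1)
    (hQ1 : ∀ a : ℕ, Q [a] = a)
    (hQrec : ∀ (l : List ℕ) (a b : ℕ), Q (l ++ [a, b]) = b * Q (l ++ [a]) + Q l)
    (l₁ l₂ : List ℕ) (h₁ : l₁ ≠ [])
    (hl₁ : ∀ x ∈ l₁, 0 < x) (hl₂ : ∀ x ∈ l₂, 0 < x)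
    (b : ℕ) (hb : 0 < b) :
    ((b : ℝ) + 1) / 2 ≤ (Q (l₁ ++ b :: l₂) : ℝ) / (Q (l₁ ++ l₂) : ℝ) ∧
      (Q (l₁ ++ b :: l₂) : ℝ) / (Q (l₁ ++ l₂) : ℝ) ≤ (b : ℝ) + 1 := by
  have hQ : IsContinuant Q := ⟨hQ0, hQ1, hQrec⟩
  obtain ⟨upper, lower⟩ := hQ.insert_bounds h₁ hl₁ hb l₂ hl₂
  have hpos : (0 : ℝ) < Q (l₁ ++ l₂) := by
    exact_mod_cast hQ.pos (by simp only [List.mem_append]; grind)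
  rw [div_le_div_iff₀ two_pos hpos, div_le_iff₀ hpos]
  constructor <;> exact_mod_cast (by linarith)

/-- Inserting an extra partial quotient `b` between positions `j` and `j+1`
(`1 ≤ j < n`) multiplies the continued fraction denominator by a factor
between `(b+1)/2` and `b+1`. Here `Q` is the continued fraction denominator
defined by `q₋₁ = 0`, `q₀ = 1`, `qₙ = aₙqₙ₋₁ + qₙ₋₂`. -/
theorem contfrac_denom_insert
    (Q : List ℕ → ℕ)
    (hQ0 : Q [] = 1)
    (hQ1 : ∀ a : ℕ, Q [a] = a)
    (hQrec : ∀ (l : List ℕ) (a b : ℕ), Q (l ++ [a, b]) = b * Q (l ++ [a]) + Q l)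
    (l₁ l₂ : List ℕ) (h₁ : l₁ ≠ []) (h₂ : l₂ ≠ [])
    (hl₁ : ∀ x ∈ l₁, 0 < x) (hl₂ : ∀ x ∈ l₂, 0 < x)
    (b : ℕ) (hb : 0 < b) :
    ((b : ℝ) + 1) / 2 ≤ (Q (l₁ ++ b :: l₂) : ℝ) / (Q (l₁ ++ l₂) : ℝ) ∧
      (Q (l₁ ++ b :: l₂) : ℝ) / (Q (l₁ ++ l₂) : ℝ) ≤ (b : ℝ) + 1 :=
  contfrac_denom_insert_general Q hQ0 hQ1 hQrec l₁ l₂ h₁ hl₁ hl₂ b hb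
end

section
/- For an irrational x ∈ [0,1), lim_{n→∞} (1/n) log qₙ(x) = (1/2)·2 log((1+√5)/2) if and only if lim_{n→∞} (1/n) Σ_{j=1}^n log aⱼ(x) = 0. Moreover either condition implies lim_{n→∞} (1/n)·#{j ≤ n : aⱼ(x) ≠ 1} = 0. -/
open Filter

/-- The Gauss map `T(x) = 1/x mod 1`, with `T(0) = 0`. -/
noncomputable def gaussMap (x : ℝ) : ℝ := Int.fract (1 / x)

/-- The `(j+1)`-th partial quotient of the continued fraction expansion of `x`. -/
noncomputable def cfA (x : ℝ) (j : ℕ) : ℕ := ⌊1 / (gaussMap^[j] x)⌋₊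

/-!
Write `qₙ` for the continuant of the partial quotients. Induction on the recurrence gives
`qₙ ≤ φⁿ ∏ aⱼ`. Conversely, the potential `(5 + √5) log qₙ₊₁ + (5 - √5) log qₙ` grows by at least
`10 log φ + (log aₙ₊₁) / 5` at every step: for `aₙ₊₁ = 1` this is concavity of `log`, with
equality when `qₙ₊₁ / qₙ = φ`; for `aₙ₊₁ ≥ 2` it follows from `φ¹⁰ < 2⁷`. Hence
`(n - 1) log φ + (1/50) ∑ log aⱼ ≤ log qₙ ≤ n log φ + ∑ log aⱼ`, and both limits determine each
other by squeezing. Finally `log aⱼ ≥ log 2` whenever `aⱼ ≠ 1`.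
-/

open Real Finset Topology
open scoped goldenRatio

lemma irrational_gaussMap {y : ℝ} (hy : Irrational y) : Irrational (gaussMap y) := by
  rw [gaussMap, Int.fract, one_div]
  exact hy.inv.sub_intCast _

lemma gaussMap_pos {y : ℝ} (hy : Irrational y) : 0 < gaussMap y :=
  (Int.fract_nonneg _).lt_of_ne' (irrational_gaussMap hy).ne_zero

lemma irrational_gaussMap_iterate {x : ℝ} (hx : Irrational x) (j : ℕ) :
    Irrational (gaussMap^[j] x) := by
  induction j with
  | zero => exact hx
  | succ j ih => rw [Function.iterate_succ_apply']; exact irrational_gaussMap ih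

lemma gaussMap_iterate_mem_Ioo {x : ℝ} (hx : x ∈ Set.Ico 0 1) (hirr : Irrational x) (j : ℕ) :
    gaussMap^[j] x ∈ Set.Ioo 0 1 := by
  cases j with
  | zero => exact ⟨hx.1.lt_of_ne' hirr.ne_zero, hx.2⟩
  | succ j =>
    rw [Function.iterate_succ_apply']
    exact ⟨gaussMap_pos (irrational_gaussMap_iterate hirr j), Int.fract_lt_one _⟩

lemma one_le_cfA {x : ℝ} (hx : x ∈ Set.Ico 0 1) (hirr : Irrational x) (j : ℕ) : 1 ≤ cfA x j := by
  obtain ⟨h0, h1⟩ := gaussMap_iterate_mem_Ioo hx hirr j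
  exact Nat.le_floor (by simpa using one_le_one_div h0 h1.le)

lemma ten_mul_log_goldenRatio_lt : 10 * log φ < 7 * log 2 := by
  have hφ10 : φ ^ 10 = 55 * φ + 34 := by
    have := goldenRatio_mul_fib_succ_add_fib 9
    norm_num at this
    linarith
  have hφ : φ < 1.7 := by
    have : √5 < 2.4 := (sqrt_lt' (by norm_num)).2 (by norm_num)
    unfold goldenRatio
    linarith
  have := log_lt_log (pow_pos goldenRatio_pos 10) (show φ ^ 10 < 2 ^ 7 by rw [hφ10]; linarith)
  rw [log_pow, log_pow] at this
  exact_mod_cast this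

lemma sqrt_five_mul_log_goldenRatio_add_log_le {r : ℝ} (hr : 0 < r) :
    √5 * log φ + log r ≤ φ * log (r + 1) := by
  have hconc := strictConcaveOn_log_Ioi.concaveOn.2
    (Set.mem_Ioi.2 (mul_pos goldenRatio_pos hr)) (Set.mem_Ioi.2 (pow_pos goldenRatio_pos 2))
    (sub_nonneg.2 one_lt_goldenRatio.le) (sub_nonneg.2 goldenRatio_lt_two.le) (by ring)
  have hsum : (φ - 1) * (φ * r) + (2 - φ) * φ ^ 2 = r + 1 := by
    linear_combination (r + 1 - φ) * goldenRatio_sq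
  simp only [smul_eq_mul, hsum, log_mul goldenRatio_ne_zero hr.ne', log_pow] at hconc
  have := mul_le_mul_of_nonneg_left hconc goldenRatio_pos.le
  linear_combination this + (log φ - log r) * goldenRatio_sq

lemma ten_mul_log_goldenRatio_add_log_div_five_le {a : ℕ} (ha : 1 ≤ a) {r : ℝ} (hr : 1 ≤ r) :
    10 * log φ + log a / 5 ≤ (5 + √5) * log (a + r⁻¹) + (5 - √5) * log r := by
  have hlogr : 0 ≤ log r := log_nonneg hr
  have h5 : 2.2 < √5 := (lt_sqrt (by norm_num)).2 (by norm_num)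
  have h5' : √5 < 5 := (sqrt_lt' (by norm_num)).2 (by norm_num)
  obtain rfl | ha2 := ha.eq_or_lt
  · have key := sqrt_five_mul_log_goldenRatio_add_log_le (zero_lt_one.trans_le hr)
    have hlog : log (1 + r⁻¹) = log (r + 1) - log r := by
      rw [← log_div (by positivity) (by positivity)]
      field_simp
    rw [Nat.cast_one, log_one, hlog]
    linear_combination (2 * √5) * key +
      (log (r + 1) - 2 * log φ) * sq_sqrt (show (0 : ℝ) ≤ 5 by norm_num)
  · have hlog2 : log 2 ≤ log a := log_le_log two_pos (mod_cast ha2)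
    have hloga : log a ≤ log (a + r⁻¹) :=
      log_le_log (by positivity) (le_add_of_nonneg_right (by positivity))
    have hlogpos : 0 ≤ log a := (log_nonneg one_le_two).trans hlog2
    nlinarith [ten_mul_log_goldenRatio_lt,
      mul_le_mul_of_nonneg_left hloga (by positivity : (0 : ℝ) ≤ 5 + √5),
      mul_nonneg (by linarith : (0 : ℝ) ≤ 5 - √5) hlogr,
      mul_nonneg (by linarith : (0 : ℝ) ≤ √5 - 2.2) hlogpos]

-- `a j` is the paper's `a_{j+1}`, so `continuant a n` is the denominator `qₙ`.
def continuant (a : ℕ → ℕ) : ℕ → ℕ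
  | 0 => 1
  | 1 => a 0
  | n + 2 => a (n + 1) * continuant a (n + 1) + continuant a n

lemma apply_ofFn_eq_continuant {Q : List ℕ → ℕ} (hQ0 : Q [] = 1) (hQ1 : ∀ m, Q [m] = m)
    (hQrec : ∀ (l : List ℕ) (m k : ℕ), Q (l ++ [m, k]) = k * Q (l ++ [m]) + Q l)
    (a : ℕ → ℕ) (n : ℕ) : Q (List.ofFn fun j : Fin n => a j) = continuant a n := by
  induction n using Nat.twoStepInduction with
  | zero => simpa [continuant] using hQ0
  | one => simpa [continuant] using hQ1 (a 0)
  | more n ih₀ ih₁ =>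
    have hsnoc : ∀ m, (List.ofFn fun j : Fin (m + 1) => a j) =
        (List.ofFn fun j : Fin m => a j) ++ [a m] := by
      intro m; rw [List.ofFn_succ']; simp
    rw [hsnoc, hsnoc, List.append_assoc, List.singleton_append, hQrec, ← hsnoc, ih₀, ih₁,
      continuant]

section Continuant

variable {a : ℕ → ℕ}

lemma one_le_continuant (ha : ∀ j, 1 ≤ a j) (n : ℕ) : 1 ≤ continuant a n := by
  induction n using Nat.twoStepInduction with
  | zero => rfl
  | one => exact ha 0
  | more n ih₀ _ => exact ih₀.trans (Nat.le_add_left _ _)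

lemma continuant_le_succ (ha : ∀ j, 1 ≤ a j) (n : ℕ) : continuant a n ≤ continuant a (n + 1) := by
  cases n with
  | zero => exact ha 0
  | succ n => exact Nat.le_add_right_of_le (Nat.le_mul_of_pos_left _ (ha _))

lemma continuant_le_goldenRatio_pow_mul_prod (ha : ∀ j, 1 ≤ a j) (n : ℕ) :
    (continuant a n : ℝ) ≤ φ ^ n * ∏ j ∈ range n, (a j : ℝ) := by
  have ha' : ∀ j, (1 : ℝ) ≤ a j := fun j => mod_cast ha j
  have hprod_mono : Monotone fun n => ∏ j ∈ range n, (a j : ℝ) :=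
    monotone_nat_of_le_succ fun n => by
      rw [prod_range_succ]
      exact le_mul_of_one_le_right (prod_nonneg fun j _ => zero_le_one.trans (ha' j)) (ha' n)
  induction n using Nat.twoStepInduction with
  | zero => simp [continuant]
  | one =>
    simpa [continuant] using le_mul_of_one_le_left (zero_le_one.trans (ha' 0)) one_lt_goldenRatio.le
  | more n ih₀ ih₁ =>
    set P := fun n => ∏ j ∈ range n, (a j : ℝ)
    have hP : P (n + 2) = P (n + 1) * a (n + 1) := prod_range_succ _ _
    push_cast [continuant]
    calc (a (n + 1) : ℝ) * continuant a (n + 1) + continuant a n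
        ≤ a (n + 1) * (φ ^ (n + 1) * P (n + 1)) + φ ^ n * P n :=
          add_le_add (mul_le_mul_of_nonneg_left ih₁ (by positivity)) ih₀
      _ = φ ^ (n + 1) * P (n + 2) + φ ^ n * P n := by rw [hP]; ring
      _ ≤ φ ^ (n + 1) * P (n + 2) + φ ^ n * P (n + 2) := by
          gcongr
          exact hprod_mono (by omega)
      _ = φ ^ (n + 2) * P (n + 2) := by
          linear_combination (-P (n + 2)) * goldenRatio_pow_sub_goldenRatio_pow n

lemma log_continuant_le (ha : ∀ j, 1 ≤ a j) (n : ℕ) :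
    log (continuant a n) ≤ n * log φ + ∑ j ∈ range n, log (a j) := by
  have hprod : (0 : ℝ) < ∏ j ∈ range n, (a j : ℝ) :=
    prod_pos fun j _ => mod_cast ha j
  have := log_le_log (mod_cast one_le_continuant ha n) (continuant_le_goldenRatio_pow_mul_prod ha n)
  rwa [log_mul (by positivity) hprod.ne', log_pow,
    log_prod fun j _ => (Nat.cast_pos.2 (ha j)).ne'] at this

lemma continuant_potential_ge (ha : ∀ j, 1 ≤ a j) (n : ℕ) :
    10 * n * log φ + (∑ j ∈ range (n + 1), log (a j)) / 5 ≤
      (5 + √5) * log (continuant a (n + 1)) + (5 - √5) * log (continuant a n) := by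
  induction n with
  | zero =>
    have : 0 ≤ log (a 0) := log_nonneg (mod_cast ha 0)
    simp only [continuant, CharP.cast_eq_zero, mul_zero, zero_mul, zero_add, sum_range_one,
      Nat.cast_one, log_one]
    nlinarith [sqrt_nonneg 5]
  | succ n ih =>
    have hq : ∀ m, (0 : ℝ) < continuant a m := fun m => mod_cast one_le_continuant ha m
    have hr : (1 : ℝ) ≤ continuant a (n + 1) / continuant a n :=
      (one_le_div (hq n)).2 (mod_cast continuant_le_succ ha n)
    have step := ten_mul_log_goldenRatio_add_log_div_five_le (ha (n + 1)) hr
    have hratio : (a (n + 1) : ℝ) + ((continuant a (n + 1) : ℝ) / continuant a n)⁻¹ =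
        (continuant a (n + 2) : ℝ) / continuant a (n + 1) := by
      rw [continuant, inv_div]
      push_cast
      field_simp [(hq (n + 1)).ne']
    rw [hratio, log_div (hq _).ne' (hq _).ne', log_div (hq _).ne' (hq _).ne'] at step
    rw [sum_range_succ]
    push_cast
    linarith

lemma log_continuant_ge (ha : ∀ j, 1 ≤ a j) (n : ℕ) :
    (n - 1) * log φ + (∑ j ∈ range n, log (a j)) / 50 ≤ log (continuant a n) := by
  cases n with
  | zero => simp [continuant, log_nonneg one_lt_goldenRatio.le]
  | succ n =>
    have hmono : log (continuant a n) ≤ log (continuant a (n + 1)) :=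
      log_le_log (mod_cast one_le_continuant ha n) (mod_cast continuant_le_succ ha n)
    have h5 : √5 < 5 := (sqrt_lt' (by norm_num)).2 (by norm_num)
    have := continuant_potential_ge ha n
    push_cast
    nlinarith [mul_le_mul_of_nonneg_left hmono (by linarith : (0 : ℝ) ≤ 5 - √5)]

lemma sum_log_nonneg (ha : ∀ j, 1 ≤ a j) (n : ℕ) : 0 ≤ ∑ j ∈ range n, log (a j) :=
  sum_nonneg fun j _ => log_nonneg (mod_cast ha j)

theorem tendsto_log_continuant_div_iff (ha : ∀ j, 1 ≤ a j) :
    Tendsto (fun n : ℕ => log (continuant a n) / n) atTop (𝓝 (log φ)) ↔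
      Tendsto (fun n : ℕ => (∑ j ∈ range n, log (a j)) / n) atTop (𝓝 0) := by
  set S := fun n : ℕ => ∑ j ∈ range n, log (a j)
  set L := log φ
  have hS : ∀ n : ℕ, 0 ≤ S n / n := fun n => div_nonneg (sum_log_nonneg ha n) n.cast_nonneg
  have hbounds : ∀ᶠ n : ℕ in atTop,
      L - L / n + S n / n / 50 ≤ log (continuant a n) / n ∧
        log (continuant a n) / n ≤ L + S n / n := by
    filter_upwards [eventually_ne_atTop 0] with n hn
    have hn' : (0 : ℝ) < n := by positivity
    constructor
    · have : L - L / n + S n / n / 50 = ((n - 1) * L + S n / 50) / n := by field_simp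
      rw [this]
      exact div_le_div_of_nonneg_right (log_continuant_ge ha n) hn'.le
    · have : L + S n / n = (n * L + S n) / n := by field_simp
      rw [this]
      exact div_le_div_of_nonneg_right (log_continuant_le ha n) hn'.le
  constructor
  · intro h
    have hupper :
        Tendsto (fun n : ℕ => 50 * (log (continuant a n) / n - L + L / n)) atTop (𝓝 0) := by
      simpa using ((h.sub_const L).add (tendsto_const_div_atTop_nhds_zero_nat L)).const_mul 50
    refine tendsto_of_tendsto_of_tendsto_of_le_of_le' tendsto_const_nhds hupper
      (Eventually.of_forall hS) ?_
    filter_upwards [hbounds] with n hn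
    linarith [hn.1]
  · intro h
    have hlower : Tendsto (fun n : ℕ => L - L / n) atTop (𝓝 L) := by
      simpa using tendsto_const_nhds.sub (tendsto_const_div_atTop_nhds_zero_nat L)
    refine tendsto_of_tendsto_of_tendsto_of_le_of_le' hlower (by simpa using h.const_add L) ?_ ?_
    · filter_upwards [hbounds] with n hn
      linarith [hn.1, hS n]
    · filter_upwards [hbounds] with n hn
      exact hn.2

lemma card_ne_one_mul_log_two_le (ha : ∀ j, 1 ≤ a j) (n : ℕ) :
    #{j ∈ range n | a j ≠ 1} * log 2 ≤ ∑ j ∈ range n, log (a j) :=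
  calc #{j ∈ range n | a j ≠ 1} * log 2
      = ∑ j ∈ range n with a j ≠ 1, log 2 := by rw [sum_const, nsmul_eq_mul]
    _ ≤ ∑ j ∈ range n with a j ≠ 1, log (a j) := by
        refine sum_le_sum fun j hj => log_le_log two_pos ?_
        have := (mem_filter.1 hj).2
        have := ha j
        exact_mod_cast (by omega : 2 ≤ a j)
    _ ≤ ∑ j ∈ range n, log (a j) :=
        sum_le_sum_of_subset_of_nonneg (filter_subset _ _) fun j _ _ => log_nonneg (mod_cast ha j)

theorem tendsto_card_ne_one_div_of_tendsto_sum_log_div (ha : ∀ j, 1 ≤ a j)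
    (h : Tendsto (fun n : ℕ => (∑ j ∈ range n, log (a j)) / n) atTop (𝓝 0)) :
    Tendsto (fun n : ℕ => (#{j ∈ range n | a j ≠ 1} : ℝ) / n) atTop (𝓝 0) := by
  have hlog2 : 0 < log 2 := log_pos one_lt_two
  refine tendsto_of_tendsto_of_tendsto_of_le_of_le tendsto_const_nhds
    (by simpa using h.div_const (log 2)) (fun n => by positivity) fun n => ?_
  rw [div_right_comm]
  exact div_le_div_of_nonneg_right ((le_div_iff₀ hlog2).2 (card_ne_one_mul_log_two_le ha n))
    n.cast_nonneg

end Continuant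

/-- For an irrational `x ∈ [0,1)`, `lim (1/n) log qₙ(x) = (1/2)·2log((1+√5)/2)`
iff `lim (1/n) Σ_{j=1}^n log aⱼ(x) = 0`, and either condition implies
`lim (1/n)·#{j ≤ n : aⱼ(x) ≠ 1} = 0`.  Here `Q` is the continued fraction
denominator, given by `q₋₁ = 0`, `q₀ = 1`, `qₙ = aₙqₙ₋₁ + qₙ₋₂`. -/
theorem khintchine_zero_iff_qn_golden
    (Q : List ℕ → ℕ)
    (hQ0 : Q [] = 1)
    (hQ1 : ∀ a : ℕ, Q [a] = a)
    (hQrec : ∀ (l : List ℕ) (a b : ℕ), Q (l ++ [a, b]) = b * Q (l ++ [a]) + Q l)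
    (x : ℝ) (hx : x ∈ Set.Ico (0 : ℝ) 1) (hirr : Irrational x) :
    (Tendsto (fun n : ℕ => (1 / (n : ℝ)) * Real.log (Q (List.ofFn fun j : Fin n => cfA x j)))
        atTop (nhds ((1 / 2) * (2 * Real.log ((1 + Real.sqrt 5) / 2)))) ↔
      Tendsto (fun n : ℕ => (1 / (n : ℝ)) * ∑ j ∈ Finset.range n, Real.log (cfA x j))
        atTop (nhds 0)) ∧
    (Tendsto (fun n : ℕ => (1 / (n : ℝ)) * Real.log (Q (List.ofFn fun j : Fin n => cfA x j)))
        atTop (nhds ((1 / 2) * (2 * Real.log ((1 + Real.sqrt 5) / 2)))) →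
      Tendsto (fun n : ℕ =>
          (1 / (n : ℝ)) * (((Finset.range n).filter fun j => cfA x j ≠ 1).card : ℝ))
        atTop (nhds 0)) ∧
    (Tendsto (fun n : ℕ => (1 / (n : ℝ)) * ∑ j ∈ Finset.range n, Real.log (cfA x j))
        atTop (nhds 0) →
      Tendsto (fun n : ℕ =>
          (1 / (n : ℝ)) * (((Finset.range n).filter fun j => cfA x j ≠ 1).card : ℝ))
        atTop (nhds 0)) := by
  have ha := one_le_cfA hx hirr
  have hlim : (1 / 2 : ℝ) * (2 * log ((1 + √5) / 2)) = log φ := by ring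
  simp only [apply_ofFn_eq_continuant hQ0 hQ1 hQrec, hlim, one_div_mul_eq_div]
  have key := tendsto_log_continuant_div_iff ha
  exact ⟨key, fun h => tendsto_card_ne_one_div_of_tendsto_sum_log_div ha (key.1 h),
    tendsto_card_ne_one_div_of_tendsto_sum_log_div ha⟩
end

section
/- For every ξ ≥ 0 there exists x₀ ∈ [0,1) whose Khintchine exponent γ(x₀) = lim_{n→∞} (1/n) Σ_{j=1}^n log aⱼ(x₀) exists and equals ξ. -/
open Filter

/-! Take the digits `aⱼ = 2 ^ (⌊p (j + 1)⌋ - ⌊p j⌋)` with `p = ξ / log 2`: the sum of `log aⱼ`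
over `j < n` telescopes to `⌊p n⌋ log 2 ~ n ξ`. Every sequence of positive digits is realized by a
real number, the limit of the finite continued fractions `1 / (a₀ + 1 / (a₁ + ⋯))`; they converge
because the composite of any two inverse branches `y ↦ 1 / (k + y)` of the Gauss map contracts
`[0, 1]` by the factor `4 / 9`. That number is irrational since its Gauss orbit never reaches `0`,
whereas the continued fraction of a rational number terminates. -/

open Set GenContFract

theorem stream_eq_some_fr_eq_gaussMap_iterate {x : ℝ}
    (h : ∀ n, gaussMap^[n] (Int.fract x) ≠ 0) (n : ℕ) :
    ∃ p, IntFractPair.stream x n = some p ∧ p.fr = gaussMap^[n] (Int.fract x) := by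
  induction n with
  | zero => exact ⟨_, IntFractPair.stream_zero x, rfl⟩
  | succ n ih =>
    obtain ⟨p, hp, hfr⟩ := ih
    refine ⟨_, IntFractPair.stream_succ_of_some hp (hfr ▸ h n), ?_⟩
    rw [Function.iterate_succ_apply', ← hfr, gaussMap, one_div]
    rfl

theorem irrational_of_forall_gaussMap_iterate_ne_zero {x : ℝ}
    (h : ∀ n, gaussMap^[n] (Int.fract x) ≠ 0) : Irrational x := by
  rintro ⟨q, rfl⟩
  obtain ⟨n, hn⟩ := (terminates_iff_rat (q : ℝ)).2 ⟨q, rfl⟩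
  obtain ⟨p, hp, -⟩ := stream_eq_some_fr_eq_gaussMap_iterate h (n + 1)
  rw [of_terminatedAt_n_iff_succ_nth_intFractPair_stream_eq_none.1 hn] at hp
  cases hp

noncomputable def gaussBranch (k : ℕ+) (y : ℝ) : ℝ := 1 / (k + y)

section gaussBranch

variable (k : ℕ+) {y z : ℝ}

theorem one_le_pnat_cast : (1 : ℝ) ≤ k := Nat.one_le_cast.2 k.pos

theorem gaussBranch_pos (hy : 0 ≤ y) : 0 < gaussBranch k y := by
  have := one_le_pnat_cast k
  unfold gaussBranch; positivity

theorem gaussBranch_le_one (hy : 0 ≤ y) : gaussBranch k y ≤ 1 := by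
  have := one_le_pnat_cast k
  rw [gaussBranch, div_le_one (by positivity)]; linarith

theorem gaussBranch_lt_one (hy : 0 < y) : gaussBranch k y < 1 := by
  have := one_le_pnat_cast k
  rw [gaussBranch, div_lt_one (by positivity)]; linarith

theorem one_div_succ_le_gaussBranch (hy : 0 ≤ y) (hy' : y ≤ 1) :
    1 / ((k : ℝ) + 1) ≤ gaussBranch k y :=
  one_div_le_one_div_of_le (by linarith [one_le_pnat_cast k]) (by linarith)

theorem floor_one_div_gaussBranch (hy : y ∈ Ico 0 1) : ⌊1 / gaussBranch k y⌋₊ = k := by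
  rw [gaussBranch, one_div_one_div, Nat.floor_eq_iff (by linarith [hy.1, one_le_pnat_cast k])]
  constructor <;> linarith [hy.1, hy.2]

theorem gaussMap_gaussBranch (hy : y ∈ Ico 0 1) : gaussMap (gaussBranch k y) = y := by
  rw [gaussMap, gaussBranch, one_div_one_div, ← Int.cast_natCast, Int.fract_intCast_add,
    Int.fract_eq_self.2 hy]

theorem abs_gaussBranch_sub_le {c : ℝ} (hc : 0 ≤ c) (hy : c ≤ y) (hz : c ≤ z) :
    |gaussBranch k y - gaussBranch k z| ≤ |y - z| / ((k : ℝ) + c) ^ 2 := by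
  have hk := one_le_pnat_cast k
  have hky : 0 < (k : ℝ) + y := by linarith
  have hkz : 0 < (k : ℝ) + z := by linarith
  have hsub : gaussBranch k y - gaussBranch k z = (z - y) / ((k + y) * (k + z)) := by
    rw [gaussBranch, gaussBranch, div_sub_div _ _ hky.ne' hkz.ne']
    ring
  rw [hsub, abs_div, abs_sub_comm, abs_of_pos (mul_pos hky hkz)]
  gcongr
  rw [sq]; gcongr

theorem abs_gaussBranch_gaussBranch_sub_le (m : ℕ+) (hy : y ∈ Icc 0 1) (hz : z ∈ Icc 0 1) :
    |gaussBranch k (gaussBranch m y) - gaussBranch k (gaussBranch m z)| ≤ 4 / 9 * |y - z| := by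
  have hk := one_le_pnat_cast k
  have hm := one_le_pnat_cast m
  set c : ℝ := 1 / ((m : ℝ) + 1)
  have hc : 0 ≤ c := by positivity
  have hout := abs_gaussBranch_sub_le k hc (one_div_succ_le_gaussBranch m hy.1 hy.2)
    (one_div_succ_le_gaussBranch m hz.1 hz.2)
  have hin := abs_gaussBranch_sub_le m le_rfl hy.1 hz.1
  have hmc : 3 / 2 ≤ (m : ℝ) * (1 + c) := by
    rw [show (m : ℝ) * (1 + c) = m * (m + 2) / (m + 1) by simp only [c]; field_simp; ring,
      le_div_iff₀ (by positivity)]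
    nlinarith
  calc |gaussBranch k (gaussBranch m y) - gaussBranch k (gaussBranch m z)|
      ≤ |gaussBranch m y - gaussBranch m z| / ((k : ℝ) + c) ^ 2 := hout
    _ ≤ (|y - z| / ((m : ℝ) + 0) ^ 2) / (1 + c) ^ 2 := by gcongr
    _ = |y - z| / ((m : ℝ) * (1 + c)) ^ 2 := by rw [add_zero, mul_pow, div_div]
    _ ≤ |y - z| / (3 / 2) ^ 2 := by gcongr
    _ = 4 / 9 * |y - z| := by ring

end gaussBranch

noncomputable def cfApprox : (ℕ → ℕ+) → ℕ → ℝ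
  | _, 0 => 0
  | a, n + 1 => gaussBranch (a 0) (cfApprox (fun i => a (i + 1)) n)

theorem cfApprox_mem_Icc (a : ℕ → ℕ+) (n : ℕ) : cfApprox a n ∈ Icc (0 : ℝ) 1 := by
  induction n generalizing a with
  | zero => simp [cfApprox]
  | succ n ih =>
    have h := (ih fun i => a (i + 1)).1
    exact ⟨(gaussBranch_pos _ h).le, gaussBranch_le_one _ h⟩

theorem abs_cfApprox_succ_sub_le (a : ℕ → ℕ+) (n : ℕ) :
    |cfApprox a (n + 1) - cfApprox a n| ≤ 3 / 2 * (2 / 3) ^ n := by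
  have h_le_one (b : ℕ → ℕ+) (m : ℕ) : |cfApprox b (m + 1) - cfApprox b m| ≤ 1 := by
    obtain ⟨h₀, h₁⟩ := cfApprox_mem_Icc b m
    obtain ⟨h₀', h₁'⟩ := cfApprox_mem_Icc b (m + 1)
    exact abs_sub_le_iff.2 ⟨by linarith, by linarith⟩
  induction n using Nat.twoStepInduction generalizing a with
  | zero => exact (h_le_one a 0).trans (by norm_num)
  | one => exact (h_le_one a 1).trans (by norm_num)
  | more n ih =>
    calc |cfApprox a (n + 3) - cfApprox a (n + 2)|
        ≤ 4 / 9 * |cfApprox (fun i => a (i + 2)) (n + 1) - cfApprox (fun i => a (i + 2)) n| :=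
          abs_gaussBranch_gaussBranch_sub_le _ _ (cfApprox_mem_Icc _ _) (cfApprox_mem_Icc _ _)
      _ ≤ 4 / 9 * (3 / 2 * (2 / 3) ^ n) := by gcongr; exact ih _
      _ = 3 / 2 * (2 / 3) ^ (n + 2) := by ring

theorem cauchySeq_cfApprox (a : ℕ → ℕ+) : CauchySeq (cfApprox a) :=
  cauchySeq_of_le_geometric (2 / 3) (3 / 2) (by norm_num) fun n => by
    rw [dist_comm, Real.dist_eq]
    exact abs_cfApprox_succ_sub_le a n

noncomputable def cfValue (a : ℕ → ℕ+) : ℝ := limUnder atTop (cfApprox a)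

theorem tendsto_cfApprox_cfValue (a : ℕ → ℕ+) :
    Tendsto (cfApprox a) atTop (nhds (cfValue a)) :=
  (cauchySeq_cfApprox a).tendsto_limUnder

theorem cfValue_nonneg (a : ℕ → ℕ+) : 0 ≤ cfValue a :=
  ge_of_tendsto' (tendsto_cfApprox_cfValue a) fun n => (cfApprox_mem_Icc a n).1

theorem cfValue_eq_gaussBranch (a : ℕ → ℕ+) :
    cfValue a = gaussBranch (a 0) (cfValue fun i => a (i + 1)) := by
  have hcont : ContinuousAt (gaussBranch (a 0)) (cfValue fun i => a (i + 1)) :=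
    continuousAt_const.div (continuousAt_const.add continuousAt_id)
      (by linarith [one_le_pnat_cast (a 0), cfValue_nonneg fun i => a (i + 1)])
  exact tendsto_nhds_unique ((tendsto_cfApprox_cfValue a).comp (tendsto_add_atTop_nat 1))
    (hcont.tendsto.comp (tendsto_cfApprox_cfValue _))

theorem cfValue_mem_Ioo (a : ℕ → ℕ+) : cfValue a ∈ Ioo (0 : ℝ) 1 := by
  have hpos : ∀ b : ℕ → ℕ+, 0 < cfValue b := fun b => by
    rw [cfValue_eq_gaussBranch]; exact gaussBranch_pos _ (cfValue_nonneg _)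
  refine ⟨hpos a, ?_⟩
  rw [cfValue_eq_gaussBranch]
  exact gaussBranch_lt_one _ (hpos _)

theorem gaussMap_iterate_cfValue (a : ℕ → ℕ+) (j : ℕ) :
    gaussMap^[j] (cfValue a) = cfValue fun i => a (i + j) := by
  induction j generalizing a with
  | zero => rfl
  | succ j ih =>
    rw [Function.iterate_succ_apply, cfValue_eq_gaussBranch,
      gaussMap_gaussBranch _ (Ioo_subset_Ico_self (cfValue_mem_Ioo _)), ih]
    simp only [add_assoc]

theorem cfA_cfValue (a : ℕ → ℕ+) (j : ℕ) : cfA (cfValue a) j = a j := by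
  rw [cfA, gaussMap_iterate_cfValue, cfValue_eq_gaussBranch,
    floor_one_div_gaussBranch _ (Ioo_subset_Ico_self (cfValue_mem_Ioo _)), zero_add]

theorem irrational_cfValue (a : ℕ → ℕ+) : Irrational (cfValue a) := by
  refine irrational_of_forall_gaussMap_iterate_ne_zero fun n => ?_
  rw [Int.fract_eq_self.2 (Ioo_subset_Ico_self (cfValue_mem_Ioo a)), gaussMap_iterate_cfValue]
  exact (cfValue_mem_Ioo _).1.ne'

theorem sum_range_log_pow_tsub (b : ℕ) {N : ℕ → ℕ} (hN : Monotone N) (n : ℕ) :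
    ∑ j ∈ Finset.range n, Real.log ((b ^ (N (j + 1) - N j) : ℕ) : ℝ)
      = ((N n - N 0 : ℕ) : ℝ) * Real.log b := by
  simp only [Nat.cast_pow, Real.log_pow, ← Finset.sum_mul, ← Nat.cast_sum,
    Finset.sum_range_tsub hN]

/-- Every `ξ ≥ 0` is attained as the Khintchine exponent
`γ(x₀) = lim (1/n) Σ_{j=1}^n log aⱼ(x₀)` of some `x₀ ∈ [0,1)`. -/
theorem khintchine_exponent_attained (ξ : ℝ) (hξ : 0 ≤ ξ) :
    ∃ x₀ : ℝ, x₀ ∈ Set.Ico (0 : ℝ) 1 ∧ Irrational x₀ ∧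
      Tendsto (fun n : ℕ => (1 / (n : ℝ)) * ∑ j ∈ Finset.range n, Real.log (cfA x₀ j))
        atTop (nhds ξ) := by
  set p := ξ / Real.log 2
  have hp : 0 ≤ p := div_nonneg hξ (Real.log_nonneg one_le_two)
  set N : ℕ → ℕ := fun n => ⌊p * n⌋₊
  have hN : Monotone N := fun m n hmn => Nat.floor_mono (by gcongr)
  set a : ℕ → ℕ+ := fun j => 2 ^ (N (j + 1) - N j)
  refine ⟨cfValue a, Ioo_subset_Ico_self (cfValue_mem_Ioo a), irrational_cfValue a, ?_⟩
  have hsum (n : ℕ) : ∑ j ∈ Finset.range n, Real.log (cfA (cfValue a) j) = N n * Real.log 2 := by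
    simp only [cfA_cfValue, a, PNat.pow_coe, PNat.val_ofNat]
    simpa [N] using sum_range_log_pow_tsub 2 hN n
  have hdensity : Tendsto (fun n : ℕ => (N n : ℝ) / n) atTop (nhds p) :=
    (tendsto_nat_floor_mul_div_atTop hp).comp tendsto_natCast_atTop_atTop
  convert hdensity.mul_const (Real.log 2) using 2 with n
  · rw [hsum]; ring
  · exact (div_mul_cancel₀ ξ (Real.log_pos one_lt_two).ne').symm
end

section
/- Let φ: ℕ → ℝ₊ satisfy lim_{n→∞} φ(n)/n = ∞. Then the set E_ξ(φ) = {x ∈ [0,1) : lim_{n→∞} (1/φ(n)) Σ_{j=1}^n log aⱼ(x) = ξ} has Hausdorff dimension at most 1/2, for every ξ > 0. -/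
/-!
If `(1/φ(n)) Σ_{j ≤ n} log aⱼ → ξ > 0` and `φ(n)/n → ∞`, then for every `M` the sums satisfy
`Σ_{j ≤ n} log aⱼ ≥ M n` for all large `n`. Such a point lies, for all large `n`, in a cylinder of
depth `n` whose digits have product `q = a₁ ⋯ aₙ ≥ e^{Mn}`, and such a cylinder has diameter at most
`q⁻²`. For `s = 1/2 + δ` this gives `q^{-2s} ≤ e^{-δMn} ∏ aⱼ^{-(1+δ)}`, so the `s`-cost of the
cover by these cylinders is at most `(e^{-δM} ζ(1+δ))ⁿ`, which tends to `0` once `M` is large.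
Hence `μH[s]` of the set vanishes for every `s > 1/2`.
-/

open Filter MeasureTheory

open Set Real Metric
open scoped ENNReal Topology

lemma abs_one_div_add_sub_one_div_add_le {c u v : ℝ} (hc : 0 < c) (hu : 0 ≤ u) (hv : 0 ≤ v) :
    |1 / (c + u) - 1 / (c + v)| ≤ |u - v| / c ^ 2 := by
  have hcu : 0 < c + u := by linarith
  have hcv : 0 < c + v := by linarith
  have hdiff : 1 / (c + u) - 1 / (c + v) = (v - u) / ((c + u) * (c + v)) := by
    field_simp
    ring
  rw [hdiff, abs_div, abs_of_pos (mul_pos hcu hcv), abs_sub_comm]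
  exact div_le_div_of_nonneg_left (abs_nonneg _) (by positivity) (by nlinarith)

lemma inv_sq_rpow_le_exp_mul_rpow {q L δ : ℝ} (hδ : 0 ≤ δ) (hq : exp L ≤ q) :
    ((q ^ 2)⁻¹) ^ (1 / 2 + δ) ≤ exp (-(δ * L)) * q ^ (-(1 + δ)) := by
  have hq₀ : 0 < q := (exp_pos L).trans_le hq
  have hsplit : ((q ^ 2)⁻¹) ^ (1 / 2 + δ) = q ^ (-δ) * q ^ (-(1 + δ)) := by
    rw [inv_rpow (by positivity), ← rpow_natCast, ← rpow_mul hq₀.le, ← rpow_neg hq₀.le,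
      ← rpow_add hq₀]
    congr 1
    push_cast
    ring
  rw [hsplit]
  gcongr
  calc q ^ (-δ) ≤ exp L ^ (-δ) := rpow_le_rpow_of_nonpos (exp_pos L) hq (by linarith)
    _ = exp (-(δ * L)) := by rw [← exp_mul, mul_neg, mul_comm]

lemma one_le_of_exp_le_prod {n : ℕ} {c : Fin n → ℕ} {L : ℝ} (h : exp L ≤ ∏ j, (c j : ℝ))
    (j : Fin n) : 1 ≤ c j := by
  refine Nat.one_le_iff_ne_zero.2 fun hj => ?_
  have : ∏ j, (c j : ℝ) = 0 := Finset.prod_eq_zero (Finset.mem_univ j) (by simp [hj])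
  linarith [exp_pos L]

lemma ENNReal.tsum_fin_pi_prod {α : Type*} (g : α → ℝ≥0∞) (n : ℕ) :
    ∑' c : Fin n → α, ∏ j, g (c j) = (∑' a, g a) ^ n := by
  induction n with
  | zero => simp
  | succ n ih =>
    calc ∑' c : Fin (n + 1) → α, ∏ j, g (c j)
        = ∑' p : α × (Fin n → α), g p.1 * ∏ j, g (p.2 j) := by
          rw [← (Fin.consEquiv fun _ => α).tsum_eq]
          simp [Fin.prod_univ_succ, Fin.consEquiv]
      _ = (∑' a, g a) ^ (n + 1) := by
          rw [ENNReal.tsum_prod', pow_succ', ← ih, ← ENNReal.tsum_mul_right]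
          simp_rw [ENNReal.tsum_mul_left]

lemma gaussMap_mem_Ico (x : ℝ) : gaussMap x ∈ Ico (0 : ℝ) 1 :=
  ⟨Int.fract_nonneg _, Int.fract_lt_one _⟩

lemma iterate_gaussMap_mem_Ico {x : ℝ} (hx : x ∈ Ico (0 : ℝ) 1) :
    ∀ j, gaussMap^[j] x ∈ Ico (0 : ℝ) 1
  | 0 => hx
  | j + 1 => by rw [Function.iterate_succ_apply']; exact gaussMap_mem_Ico _

lemma eq_one_div_cfA_zero_add_gaussMap {x : ℝ} (hx : 0 < x) :
    x = 1 / (cfA x 0 + gaussMap x) := by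
  have hfloor : (cfA x 0 : ℝ) = ⌊1 / x⌋ := by
    rw [cfA, Function.iterate_zero_apply, ← Int.natCast_floor_eq_floor (by positivity)]
    rfl
  rw [hfloor, gaussMap, Int.floor_add_fract, one_div_one_div]

lemma pos_of_one_le_cfA_zero {x : ℝ} (hx : 0 ≤ x) (h : 1 ≤ cfA x 0) : 0 < x := by
  refine hx.lt_of_ne fun h₀ => ?_
  simp [cfA, ← h₀] at h

lemma one_le_cfA_zero {x : ℝ} (hx₀ : 0 < x) (hx₁ : x ≤ 1) : 1 ≤ cfA x 0 :=
  Nat.le_floor (by simpa using one_le_one_div hx₀ hx₁)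

/-- A vanishing partial quotient means the orbit has reached the fixed point `0`. -/
lemma cfA_eq_zero_of_le {x : ℝ} {j : ℕ} (hx : x ∈ Ico (0 : ℝ) 1) (hj : cfA x j = 0) {i : ℕ}
    (hi : j ≤ i) : cfA x i = 0 := by
  have hTj := iterate_gaussMap_mem_Ico hx j
  have h₀ : gaussMap^[j] x = 0 := by
    by_contra hne
    have : 1 ≤ cfA (gaussMap^[j] x) 0 := one_le_cfA_zero (hTj.1.lt_of_ne' hne) hTj.2.le
    exact absurd hj (Nat.one_le_iff_ne_zero.1 this)
  obtain ⟨k, rfl⟩ := Nat.exists_eq_add_of_le hi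
  have : gaussMap^[j + k] x = 0 := by
    rw [add_comm, Function.iterate_add_apply, h₀, Function.iterate_fixed (by simp [gaussMap])]
  simp [cfA, this]

noncomputable def cfLogSum (x : ℝ) (n : ℕ) : ℝ := ∑ j ∈ Finset.range n, log (cfA x j)

lemma cfLogSum_eq_of_cfA_eq_zero {x : ℝ} {j n : ℕ} (hx : x ∈ Ico (0 : ℝ) 1) (hj : cfA x j = 0)
    (hn : j ≤ n) : cfLogSum x n = cfLogSum x j := by
  refine (Finset.sum_subset (Finset.range_subset_range.2 hn) fun i _ hi => ?_).symm
  rw [cfA_eq_zero_of_le hx hj (not_lt.1 (Finset.mem_range.not.1 hi)), Nat.cast_zero, log_zero]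

def cfLinearGrowthSet (M : ℝ) (N : ℕ) : Set ℝ :=
  {x | x ∈ Ico (0 : ℝ) 1 ∧ ∀ n ≥ N, M * n ≤ cfLogSum x n}

lemma one_le_cfA_of_mem_cfLinearGrowthSet {M : ℝ} {N : ℕ} (hM : 0 < M) {x : ℝ}
    (hx : x ∈ cfLinearGrowthSet M N) (j : ℕ) : 1 ≤ cfA x j := by
  refine Nat.one_le_iff_ne_zero.2 fun hj => ?_
  obtain ⟨n, hn⟩ := ((tendsto_natCast_atTop_atTop.const_mul_atTop hM).eventually_gt_atTop
    (cfLogSum x j)).and (eventually_ge_atTop (max N j)) |>.exists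
  have := hx.2 n (le_of_max_le_left hn.2)
  rw [cfLogSum_eq_of_cfA_eq_zero hx.1 hj (le_of_max_le_right hn.2)] at this
  exact hn.1.not_ge this

lemma exp_mul_le_prod_cfA {M : ℝ} {N : ℕ} (hM : 0 < M) {x : ℝ} (hx : x ∈ cfLinearGrowthSet M N)
    {n : ℕ} (hn : N ≤ n) : exp (M * n) ≤ ∏ j : Fin n, (cfA x j : ℝ) := by
  rw [Fin.prod_univ_eq_prod_range (fun j => (cfA x j : ℝ))]
  calc exp (M * n) ≤ exp (cfLogSum x n) := exp_le_exp.2 (hx.2 n hn)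
    _ = _ := by
      rw [cfLogSum, exp_sum]
      refine Finset.prod_congr rfl fun j _ => exp_log ?_
      exact_mod_cast one_le_cfA_of_mem_cfLinearGrowthSet hM hx j

def cfCylinder (n : ℕ) (c : Fin n → ℕ) : Set ℝ :=
  {x | x ∈ Ico (0 : ℝ) 1 ∧ ∀ j : Fin n, cfA x j = c j}

lemma gaussMap_mem_cfCylinder {n : ℕ} {c : Fin (n + 1) → ℕ} {x : ℝ}
    (hx : x ∈ cfCylinder (n + 1) c) : gaussMap x ∈ cfCylinder n (Fin.tail c) :=
  ⟨gaussMap_mem_Ico x, fun j => hx.2 j.succ⟩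

lemma eq_one_div_add_gaussMap_of_mem_cfCylinder {n : ℕ} {c : Fin (n + 1) → ℕ} (hc : 1 ≤ c 0)
    {x : ℝ} (hx : x ∈ cfCylinder (n + 1) c) : x = 1 / (c 0 + gaussMap x) := by
  have h₀ : cfA x 0 = c 0 := hx.2 0
  rw [← h₀]
  exact eq_one_div_cfA_zero_add_gaussMap (pos_of_one_le_cfA_zero hx.1.1 (h₀ ▸ hc))

lemma abs_sub_le_of_mem_cfCylinder {n : ℕ} {c : Fin n → ℕ} (hc : ∀ j, 1 ≤ c j) {x y : ℝ}
    (hx : x ∈ cfCylinder n c) (hy : y ∈ cfCylinder n c) :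
    |x - y| ≤ ((∏ j, (c j : ℝ)) ^ 2)⁻¹ := by
  induction n generalizing x y with
  | zero =>
    simp only [Finset.univ_eq_empty, Finset.prod_empty, one_pow, inv_one, abs_sub_le_iff]
    constructor <;> linarith [hx.1.1, hx.1.2, hy.1.1, hy.1.2]
  | succ n ih =>
    have hc₀ : (1 : ℝ) ≤ c 0 := by exact_mod_cast hc 0
    have hx₀ := eq_one_div_add_gaussMap_of_mem_cfCylinder (hc 0) hx
    have hy₀ := eq_one_div_add_gaussMap_of_mem_cfCylinder (hc 0) hy
    have htail := ih (fun j => hc j.succ) (gaussMap_mem_cfCylinder hx) (gaussMap_mem_cfCylinder hy)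
    calc |x - y| = |1 / (c 0 + gaussMap x) - 1 / (c 0 + gaussMap y)| := by rw [← hx₀, ← hy₀]
      _ ≤ |gaussMap x - gaussMap y| / (c 0 : ℝ) ^ 2 :=
          abs_one_div_add_sub_one_div_add_le (by linarith)
            (gaussMap_mem_Ico x).1 (gaussMap_mem_Ico y).1
      _ ≤ ((∏ j : Fin n, (c j.succ : ℝ)) ^ 2)⁻¹ / (c 0 : ℝ) ^ 2 := by gcongr
      _ = ((∏ j, (c j : ℝ)) ^ 2)⁻¹ := by
          rw [Fin.prod_univ_succ, mul_pow, mul_inv, div_eq_mul_inv, mul_comm]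

lemma ediam_cfCylinder_le {n : ℕ} {c : Fin n → ℕ} (hc : ∀ j, 1 ≤ c j) :
    ediam (cfCylinder n c) ≤ ENNReal.ofReal ((∏ j, (c j : ℝ)) ^ 2)⁻¹ :=
  ediam_le fun _ hx _ hy => by
    rw [edist_dist, dist_eq]
    exact ENNReal.ofReal_le_ofReal (abs_sub_le_of_mem_cfCylinder hc hx hy)

lemma ediam_cfCylinder_le_of_exp_le {n : ℕ} {c : Fin n → ℕ} {L : ℝ}
    (h : exp L ≤ ∏ j, (c j : ℝ)) : ediam (cfCylinder n c) ≤ ENNReal.ofReal (exp L ^ 2)⁻¹ :=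
  (ediam_cfCylinder_le (one_le_of_exp_le_prod h)).trans <|
    ENNReal.ofReal_le_ofReal <| by gcongr

lemma ediam_cfCylinder_rpow_le {n : ℕ} {c : Fin n → ℕ} {δ L : ℝ} (hδ : 0 ≤ δ)
    (h : exp L ≤ ∏ j, (c j : ℝ)) :
    ediam (cfCylinder n c) ^ (1 / 2 + δ) ≤
      ENNReal.ofReal (exp (-(δ * L))) * ∏ j, ENNReal.ofReal ((c j : ℝ) ^ (-(1 + δ))) :=
  calc ediam (cfCylinder n c) ^ (1 / 2 + δ)
      ≤ ENNReal.ofReal ((∏ j, (c j : ℝ)) ^ 2)⁻¹ ^ (1 / 2 + δ) :=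
        ENNReal.rpow_le_rpow (ediam_cfCylinder_le (one_le_of_exp_le_prod h)) (by positivity)
    _ = ENNReal.ofReal (((∏ j, (c j : ℝ)) ^ 2)⁻¹ ^ (1 / 2 + δ)) :=
        ENNReal.ofReal_rpow_of_nonneg (by positivity) (by positivity)
    _ ≤ ENNReal.ofReal (exp (-(δ * L)) * (∏ j, (c j : ℝ)) ^ (-(1 + δ))) :=
        ENNReal.ofReal_le_ofReal (inv_sq_rpow_le_exp_mul_rpow hδ h)
    _ = _ := by
        rw [← finsetProd_rpow _ _ fun _ _ => Nat.cast_nonneg _, ENNReal.ofReal_mul (exp_pos _).le,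
          ENNReal.ofReal_prod_of_nonneg fun _ _ => by positivity]

-- The `a = 0` term of the series is `0 ^ (-(1 + δ)) = 0`.
lemma eventually_exp_mul_tsum_rpow_lt_one {δ : ℝ} (hδ : 0 < δ) :
    ∀ᶠ M in atTop,
      ENNReal.ofReal (exp (-(δ * M))) * ∑' a : ℕ, ENNReal.ofReal ((a : ℝ) ^ (-(1 + δ))) < 1 := by
  have hK : ∑' a : ℕ, ENNReal.ofReal ((a : ℝ) ^ (-(1 + δ))) ≠ ∞ := by
    rw [← ENNReal.ofReal_tsum_of_nonneg (fun _ => by positivity)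
      (summable_nat_rpow.2 (by linarith))]
    exact ENNReal.ofReal_ne_top
  have hexp : Tendsto (fun M => ENNReal.ofReal (exp (-(δ * M)))) atTop (𝓝 0) := by
    simpa using ENNReal.tendsto_ofReal <| tendsto_exp_atBot.comp <|
      tendsto_neg_atTop_atBot.comp <| tendsto_id.const_mul_atTop hδ
  exact (ENNReal.Tendsto.mul_const hexp (.inr hK)).eventually_lt_const (by simp)

theorem hausdorffMeasure_cfLinearGrowthSet_eq_zero {δ M : ℝ} (hδ : 0 ≤ δ) (hM : 0 < M)
    (hθ : ENNReal.ofReal (exp (-(δ * M))) * ∑' a : ℕ, ENNReal.ofReal ((a : ℝ) ^ (-(1 + δ))) < 1)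
    (N : ℕ) : μH[1 / 2 + δ] (cfLinearGrowthSet M N) = 0 := by
  set g : ℕ → ℝ≥0∞ := fun a => ENNReal.ofReal ((a : ℝ) ^ (-(1 + δ)))
  let t (n : ℕ) (c : {c : Fin n → ℕ // exp (M * n) ≤ ∏ j, (c j : ℝ)}) : Set ℝ := cfCylinder n c
  have hr : Tendsto (fun n : ℕ => ENNReal.ofReal (exp (M * n) ^ 2)⁻¹) atTop (𝓝 0) := by
    have : Tendsto (fun n : ℕ => (exp (M * n) ^ 2)⁻¹) atTop (𝓝 0) :=
      tendsto_inv_atTop_zero.comp <| (tendsto_pow_atTop two_ne_zero).comp <|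
        tendsto_exp_atTop.comp <| tendsto_natCast_atTop_atTop.const_mul_atTop hM
    simpa using ENNReal.tendsto_ofReal this
  have hcover : ∀ᶠ n in atTop, cfLinearGrowthSet M N ⊆ ⋃ c, t n c :=
    (eventually_ge_atTop N).mono fun n hn x hx =>
      mem_iUnion.2 ⟨⟨fun j => cfA x j, exp_mul_le_prod_cfA hM hx hn⟩,
        show x ∈ cfCylinder n _ from ⟨hx.1, fun _ => rfl⟩⟩
  have hcost (n : ℕ) : ∑' c, ediam (t n c) ^ (1 / 2 + δ) ≤
      (ENNReal.ofReal (exp (-(δ * M))) * ∑' a, g a) ^ n :=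
    calc ∑' c, ediam (t n c) ^ (1 / 2 + δ)
        ≤ ∑' c : {c : Fin n → ℕ // exp (M * n) ≤ ∏ j, (c j : ℝ)},
            ENNReal.ofReal (exp (-(δ * (M * n)))) * ∏ j, g (c.1 j) :=
          ENNReal.tsum_le_tsum fun c => ediam_cfCylinder_rpow_le hδ c.2
      _ ≤ ∑' c : Fin n → ℕ, ENNReal.ofReal (exp (-(δ * (M * n)))) * ∏ j, g (c j) :=
          ENNReal.tsum_comp_le_tsum_of_injective Subtype.val_injective
            (fun c : Fin n → ℕ => ENNReal.ofReal (exp (-(δ * (M * n)))) * ∏ j, g (c j))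
      _ = _ := by
          rw [ENNReal.tsum_mul_left, ENNReal.tsum_fin_pi_prod, mul_pow,
            ← ENNReal.ofReal_pow (exp_pos _).le, ← exp_nat_mul]
          ring_nf
  refine nonpos_iff_eq_zero.1 ?_
  calc μH[1 / 2 + δ] (cfLinearGrowthSet M N)
      ≤ liminf (fun n => ∑' c, ediam (t n c) ^ (1 / 2 + δ)) atTop :=
        Measure.hausdorffMeasure_le_liminf_tsum _ _ _ hr t
          (Eventually.of_forall fun n c => ediam_cfCylinder_le_of_exp_le c.2) hcover
    _ ≤ liminf (fun n => (ENNReal.ofReal (exp (-(δ * M))) * ∑' a, g a) ^ n) atTop :=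
        liminf_le_liminf (Eventually.of_forall hcost)
    _ = 0 := (ENNReal.tendsto_pow_atTop_nhds_zero_of_lt_one hθ).liminf_eq

theorem dimH_setOf_tendsto_cfLogSum_div_atTop_le_half :
    dimH {x : ℝ | x ∈ Ico (0 : ℝ) 1 ∧ Tendsto (fun n : ℕ => cfLogSum x n / n) atTop atTop} ≤
      1 / 2 := by
  refine dimH_le fun d hd => not_lt.1 fun hlt => ?_
  have hδ : 0 < (d : ℝ) - 1 / 2 := by
    simpa using (ENNReal.toReal_lt_toReal (by simp) (by simp)).2 hlt
  obtain ⟨M, hM, hθ⟩ :=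
    ((eventually_gt_atTop 0).and (eventually_exp_mul_tsum_rpow_lt_one hδ)).exists
  have hsub : {x : ℝ | x ∈ Ico (0 : ℝ) 1 ∧ Tendsto (fun n : ℕ => cfLogSum x n / n) atTop atTop} ⊆
      ⋃ N, cfLinearGrowthSet M N := fun x hx => by
    obtain ⟨N, hN⟩ :=
      eventually_atTop.1 ((hx.2.eventually_ge_atTop M).and (eventually_gt_atTop 0))
    exact mem_iUnion.2
      ⟨N, hx.1, fun n hn => (le_div_iff₀ (Nat.cast_pos.2 (hN n hn).2)).1 (hN n hn).1⟩
  have hnull := measure_mono_null hsub <| measure_iUnion_null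
    (hausdorffMeasure_cfLinearGrowthSet_eq_zero hδ.le hM hθ)
  rw [add_sub_cancel] at hnull
  rw [hnull] at hd
  exact ENNReal.zero_ne_top hd

theorem dimH_fast_khintchine_le_half_general (φ : ℕ → ℝ)
    (hφ : Tendsto (fun n : ℕ => φ n / n) atTop atTop) (ξ : ℝ) (hξ : 0 < ξ) :
    dimH {x : ℝ | x ∈ Set.Ico (0 : ℝ) 1 ∧
        Tendsto (fun n : ℕ => (∑ j ∈ Finset.range n, Real.log (cfA x j)) / φ n)
          atTop (nhds ξ)} ≤ 1 / 2 := by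
  refine le_trans (dimH_mono ?_) dimH_setOf_tendsto_cfLogSum_div_atTop_le_half
  rintro x ⟨hx₀, hx⟩
  refine ⟨hx₀, (hx.pos_mul_atTop hξ hφ).congr' ?_⟩
  filter_upwards [hφ.eventually_gt_atTop 0] with n hn
  have hφn : φ n ≠ 0 := fun h => by simp [h] at hn
  exact div_mul_div_cancel₀ hφn

/-- If `φ(n)/n → ∞`, then for every `ξ > 0` the level set
`E_ξ(φ) = {x ∈ [0,1) : lim (1/φ(n)) Σ_{j=1}^n log aⱼ(x) = ξ}` has Hausdorff
dimension at most `1/2`. -/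
theorem dimH_fast_khintchine_le_half (φ : ℕ → ℝ) (hφpos : ∀ n, 0 < φ n)
    (hφ : Tendsto (fun n : ℕ => φ n / n) atTop atTop) (ξ : ℝ) (hξ : 0 < ξ) :
    dimH {x : ℝ | x ∈ Set.Ico (0 : ℝ) 1 ∧
        Tendsto (fun n : ℕ => (∑ j ∈ Finset.range n, Real.log (cfA x j)) / φ n)
          atTop (nhds ξ)} ≤ 1 / 2 :=
  dimH_fast_khintchine_le_half_general φ hφ ξ hξ
end
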